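/- Let G be a traceable simple graph on n vertices with n ≥ 4·max{dist_Π(G), 1}, where Π is the class of cographs and dist_Π(G) is the distance of G to the class of cographs. Then G contains at least (1/8)·n·log₂(n/(2(dist_Π(G)+1))) edges. -/

import Mathlib

/-- A graph is traceable if it contains a Hamiltonian path. -/
def Traceable {V : Type*} [DecidableEq V] (G : SimpleGraph V) : Prop :=
  ∃ (u v : V) (p : G.Walk u v), p.IsHamiltonian

/-- A graph is a cograph iff it contains no induced path on four vertices. -/
def IsCograph {V : Type*} (G : SimpleGraph V) : Prop :=
  ¬ ∃ a b c d : V, [a, b, c, d].Nodup ∧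
      G.Adj a b ∧ G.Adj b c ∧ G.Adj c d ∧ ¬ G.Adj a c ∧ ¬ G.Adj a d ∧ ¬ G.Adj b d

/-- The distance of `G` to the class of cographs: the minimum size of a vertex set
whose deletion yields a cograph. -/
noncomputable def distToCograph {V : Type*} [Fintype V] [DecidableEq V]
    (G : SimpleGraph V) : ℕ :=
  sInf {k | ∃ S : Finset V, S.card ≤ k ∧ IsCograph (G.induce (↑(Sᶜ) : Set V))}

namespace Aux14


/-- floor-div nesting for dyadic scales -/
lemma nested (x m j : ℕ) : x * 2^j / m = (x * 2^(j+1) / m) / 2 := by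
  rw [Nat.div_div_eq_div_mul, pow_succ, ← mul_assoc]
  exact (Nat.mul_div_mul_right _ _ (by norm_num)).symm

lemma sameStep {x y m j : ℕ} (h : x * 2^(j+1) / m = y * 2^(j+1) / m) :
    x * 2^j / m = y * 2^j / m := by
  rw [nested x m j, nested y m j, h]

lemma sameUp {x y m : ℕ} : ∀ {j i : ℕ}, i ≤ j → x * 2^j / m = y * 2^j / m →
    x * 2^i / m = y * 2^i / m := by
  intro j
  induction j with
  | zero => intro i hi h; interval_cases i; exact h
  | succ j ih =>
      intro i hi h
      rcases Nat.lt_succ_iff_lt_or_eq.mp (Nat.lt_succ_of_le hi) with h' | h'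
      · exact ih (by omega) (sameStep h)
      · subst h'; exact h

lemma ceil_le (N q : ℕ) (hq : 0 < q) : N ≤ ((N + q - 1) / q) * q := by
  have hdm := Nat.div_add_mod (N + q - 1) q
  have hmod : (N + q - 1) % q < q := Nat.mod_lt _ hq
  have e0 : q * ((N + q - 1) / q) = ((N + q - 1) / q) * q := mul_comm _ _
  omega

lemma fiber_lb (m q t : ℕ) (hq : 0 < q) (ht : t < q) (hqm : q ≤ m) :
    ∃ a0, ∀ d, d < m / q → (a0 + d) < m ∧ (a0 + d) * q / m = t := by
  have hm : 0 < m := lt_of_lt_of_le hq hqm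
  refine ⟨(t * m + q - 1) / q, fun d hd => ?_⟩
  set a0 := (t * m + q - 1) / q with ha0
  have h1 : t * m ≤ a0 * q := ceil_le (t * m) q hq
  have h2 : a0 * q ≤ t * m + q - 1 := Nat.div_mul_le_self _ _
  have h3 : (d + 1) * q ≤ (m / q) * q := Nat.mul_le_mul_right q hd
  have h4 : (m / q) * q ≤ m := Nat.div_mul_le_self _ _
  have e1 : (d + 1) * q = d * q + q := by ring
  have hdq : d * q + q ≤ m := by omega
  have e2 : (a0 + d) * q = a0 * q + d * q := by ring
  have e3 : (t + 1) * m = t * m + m := by ring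
  have key : (a0 + d) * q < (t + 1) * m := by omega
  have hlt : a0 + d < m := by
    by_contra hc
    push_neg at hc
    have h5 : m * q ≤ (a0 + d) * q := Nat.mul_le_mul_right q hc
    have h6 : (t + 1) * m ≤ q * m := Nat.mul_le_mul_right m ht
    have e4 : q * m = m * q := mul_comm _ _
    omega
  have h7 : t * m ≤ (a0 + d) * q := by omega
  refine ⟨hlt, le_antisymm ?_ ?_⟩
  · exact Nat.le_of_lt_succ ((Nat.div_lt_iff_lt_mul hm).mpr key)
  · exact (Nat.le_div_iff_mul_le hm).mpr h7

lemma fiber_lt {m q x y tx ty : ℕ} (hx : x * q / m = tx) (hy : y * q / m = ty)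
    (h : tx < ty) : x < y := by
  by_contra hc
  push_neg at hc
  have := Nat.div_le_div_right (c := m) (Nat.mul_le_mul_right q hc)
  omega



variable {V : Type*}

/-- In a P4-free region, vertices joined by a walk within the region are at distance ≤ 2. -/
lemma dist2 (G : SimpleGraph V) (Q : Set V)
    (hP4 : ∀ a b c d : V, a ∈ Q → b ∈ Q → c ∈ Q → d ∈ Q →
      a ≠ b → a ≠ c → a ≠ d → b ≠ c → b ≠ d → c ≠ d →
      G.Adj a b → G.Adj b c → G.Adj c d → ¬G.Adj a c → ¬G.Adj a d → ¬G.Adj b d → False) :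
    ∀ L : ℕ, ∀ (u v : V) (w : G.Walk u v), w.length ≤ L →
      (∀ x ∈ w.support, x ∈ Q) →
      u = v ∨ G.Adj u v ∨ ∃ x ∈ Q, G.Adj u x ∧ G.Adj x v := by
  intro L
  induction L with
  | zero =>
      intro u v w hw _
      cases w with
      | nil => exact Or.inl rfl
      | cons h q => simp [SimpleGraph.Walk.length_cons] at hw
  | succ L ih =>
      intro u v w hw hsupp
      by_cases hmin : ∃ w₂ : G.Walk u v, w₂.length < w.length ∧ ∀ x ∈ w₂.support, x ∈ Q
      · obtain ⟨w₂, hlen, hs⟩ := hmin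
        exact ih u v w₂ (by omega) hs
      · push_neg at hmin
        cases w with
        | nil => exact Or.inl rfl
        | cons h1 q1 =>
          cases q1 with
          | nil => exact Or.inr (Or.inl h1)
          | cons h2 q2 =>
            cases q2 with
            | nil =>
                refine Or.inr (Or.inr ⟨_, ?_, h1, h2⟩)
                apply hsupp
                simp [SimpleGraph.Walk.support_cons]
            | cons h3 q3 =>
              exfalso
              -- u = a, then b, c, d
              rename_i b c d
              -- basic membership
              have hmem : ∀ x ∈ (SimpleGraph.Walk.cons h1 (SimpleGraph.Walk.cons h2
                  (SimpleGraph.Walk.cons h3 q3))).support, x ∈ Q := hsupp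
              have hu : u ∈ Q := hmem u (by simp)
              have hb : b ∈ Q := hmem b (by simp)
              have hc : c ∈ Q := hmem c (by simp)
              have hsub : ∀ x ∈ q3.support, x ∈ Q := by
                intro x hx
                apply hmem
                simp only [SimpleGraph.Walk.support_cons, List.mem_cons]
                tauto
              have hd : d ∈ Q := hsub d q3.start_mem_support
              have hlen3 : (SimpleGraph.Walk.cons h1 (SimpleGraph.Walk.cons h2
                  (SimpleGraph.Walk.cons h3 q3))).length = q3.length + 3 := by
                simp [SimpleGraph.Walk.length_cons]
              -- helper to refute shorter walks
              have no_short : ∀ (w₂ : G.Walk u v), (∀ x ∈ w₂.support, x ∈ Q) →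
                  ¬ (w₂.length < q3.length + 3) := by
                intro w₂ hs hl
                obtain ⟨x, hx1, hx2⟩ := hmin w₂ (by rw [hlen3]; exact hl)
                exact hx2 (hs x hx1)
              -- u ≠ c
              have huc : u ≠ c := by
                intro hEq
                subst hEq
                exact no_short (SimpleGraph.Walk.cons h3 q3)
                  (fun x hx => hmem x (by simp only [SimpleGraph.Walk.support_cons, List.mem_cons] at hx ⊢; tauto))
                  (by simp only [SimpleGraph.Walk.length_cons]; omega)
              -- u ≠ d
              have hud : u ≠ d := by
                intro hEq
                subst hEq
                exact no_short q3 hsub (by omega)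
              -- b ≠ d
              have hbd : b ≠ d := by
                intro hEq
                subst hEq
                exact no_short (SimpleGraph.Walk.cons h1 q3)
                  (fun x hx => hmem x (by simp only [SimpleGraph.Walk.support_cons, List.mem_cons] at hx ⊢; tauto))
                  (by simp only [SimpleGraph.Walk.length_cons]; omega)
              -- non-adjacency u c
              have hnac : ¬ G.Adj u c := by
                intro hAdj
                exact no_short (SimpleGraph.Walk.cons hAdj (SimpleGraph.Walk.cons h3 q3))
                  (fun x hx => hmem x (by simp only [SimpleGraph.Walk.support_cons, List.mem_cons] at hx ⊢; tauto))
                  (by simp only [SimpleGraph.Walk.length_cons]; omega)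
              have hnad : ¬ G.Adj u d := by
                intro hAdj
                exact no_short (SimpleGraph.Walk.cons hAdj q3)
                  (fun x hx => hmem x (by simp only [SimpleGraph.Walk.support_cons, List.mem_cons] at hx ⊢; tauto))
                  (by simp only [SimpleGraph.Walk.length_cons]; omega)
              have hnbd : ¬ G.Adj b d := by
                intro hAdj
                exact no_short (SimpleGraph.Walk.cons h1 (SimpleGraph.Walk.cons hAdj q3))
                  (fun x hx => hmem x (by simp only [SimpleGraph.Walk.support_cons, List.mem_cons] at hx ⊢; tauto))
                  (by simp only [SimpleGraph.Walk.length_cons]; omega)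
              exact hP4 u b c d hu hb hc hd (G.ne_of_adj h1) huc hud (G.ne_of_adj h2)
                hbd (G.ne_of_adj h3) h1 h2 h3 hnac hnad hnbd



variable {V : Type*} {G : SimpleGraph V}

lemma getVert_mem_support {u v : V} (p : G.Walk u v) {i : ℕ} (hi : i ≤ p.length) :
    p.getVert i ∈ p.support :=
  SimpleGraph.Walk.mem_support_iff_exists_getVert.mpr ⟨i, rfl, hi⟩

lemma getVert_injOn {u v : V} {p : G.Walk u v} (h : p.support.Nodup) :
    ∀ i, i ≤ p.length → ∀ j, j ≤ p.length → p.getVert i = p.getVert j → i = j := by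
  induction p with
  | nil => intro i hi j hj _; simp at hi hj; omega
  | cons ha q ih =>
      rw [SimpleGraph.Walk.support_cons, List.nodup_cons] at h
      obtain ⟨hnotmem, hnd⟩ := h
      intro i hi j hj heq
      match i, j with
      | 0, 0 => rfl
      | 0, (j+1) =>
          exfalso
          rw [SimpleGraph.Walk.getVert_zero, SimpleGraph.Walk.getVert_cons_succ] at heq
          exact hnotmem (heq ▸ getVert_mem_support q (by
            simp [SimpleGraph.Walk.length_cons] at hj; omega))
      | (i+1), 0 =>
          exfalso
          rw [SimpleGraph.Walk.getVert_zero, SimpleGraph.Walk.getVert_cons_succ] at heq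
          exact hnotmem (heq ▸ getVert_mem_support q (by
            simp [SimpleGraph.Walk.length_cons] at hi; omega))
      | (i+1), (j+1) =>
          rw [SimpleGraph.Walk.getVert_cons_succ, SimpleGraph.Walk.getVert_cons_succ] at heq
          simp only [SimpleGraph.Walk.length_cons] at hi hj
          have := ih hnd i (by omega) j (by omega) heq
          omega

lemma walkBetween {u v : V} (p : G.Walk u v) :
    ∀ (len i j : ℕ), i + len = j → j ≤ p.length →
      ∃ w : G.Walk (p.getVert i) (p.getVert j),
        ∀ x ∈ w.support, ∃ t, i ≤ t ∧ t ≤ j ∧ x = p.getVert t := by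
  intro len
  induction len with
  | zero =>
      intro i j hij _
      subst hij
      exact ⟨SimpleGraph.Walk.nil.copy rfl (by rw [Nat.add_zero]), by
        intro x hx
        simp [SimpleGraph.Walk.support_copy] at hx
        exact ⟨i, le_refl _, by omega, hx⟩⟩
  | succ len ih =>
      intro i j hij hj
      obtain ⟨w, hw⟩ := ih (i + 1) j (by omega) hj
      refine ⟨SimpleGraph.Walk.cons (p.adj_getVert_succ (by omega)) w, ?_⟩
      intro x hx
      rw [SimpleGraph.Walk.support_cons, List.mem_cons] at hx
      rcases hx with hx | hx
      · exact ⟨i, le_refl _, by omega, hx⟩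
      · obtain ⟨t, h1, h2, h3⟩ := hw x hx
        exact ⟨t, by omega, h2, h3⟩



lemma segDecomp : ∀ (r : ℕ) (D : Finset ℕ) (n : ℕ), D.card ≤ r → (∀ d ∈ D, d < n) →
    ∃ T : Finset (ℕ × ℕ),
      T.card ≤ D.card + 1 ∧
      (∀ s ∈ T, s.1 ≤ s.2 ∧ s.2 ≤ n) ∧
      (∀ s ∈ T, ∀ x, s.1 ≤ x → x < s.2 → x ∉ D) ∧
      (∀ s ∈ T, ∀ s' ∈ T, s ≠ s' → s.2 ≤ s'.1 ∨ s'.2 ≤ s.1) ∧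
      n ≤ (∑ s ∈ T, (s.2 - s.1)) + D.card := by
  intro r
  induction r with
  | zero =>
      intro D n hcard _
      have hD : D = ∅ := Finset.card_eq_zero.mp (by omega)
      subst hD
      refine ⟨{(0, n)}, by simp, by simp, by simp, by simp, by simp⟩
  | succ r ih =>
      intro D n hcard hlt
      by_cases hD : D = ∅
      · subst hD
        refine ⟨{(0, n)}, by simp, by simp, by simp, by simp, by simp⟩
      · have hne : D.Nonempty := Finset.nonempty_of_ne_empty hD
        set d := D.max' hne with hd
        have hdD : d ∈ D := D.max'_mem hne
        have hdn : d < n := hlt d hdD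
        set D' := D.erase d with hD'
        have hcard' : D'.card = D.card - 1 := Finset.card_erase_of_mem hdD
        have hltd : ∀ x ∈ D', x < d := by
          intro x hx
          have h1 := Finset.le_max' D x (Finset.mem_of_mem_erase hx)
          have h2 := Finset.ne_of_mem_erase hx
          omega
        obtain ⟨T', hT1, hT2, hT3, hT4, hT5⟩ := ih D' d (by omega) hltd
        have hnotin : (d + 1, n) ∉ T' := by
          intro hmem
          have := (hT2 _ hmem).2
          simp at this
          omega
        have hDpos : 1 ≤ D.card := Finset.card_pos.mpr hne
        refine ⟨insert (d + 1, n) T', ?_, ?_, ?_, ?_, ?_⟩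
        · calc (insert (d+1, n) T').card ≤ T'.card + 1 := Finset.card_insert_le _ _
            _ ≤ D.card + 1 := by omega
        · intro s hs
          rcases Finset.mem_insert.mp hs with h | h
          · subst h; exact ⟨by omega, le_refl _⟩
          · have := hT2 s h; exact ⟨this.1, by omega⟩
        · intro s hs x hx1 hx2 hxD
          rcases Finset.mem_insert.mp hs with h | h
          · subst h
            simp at hx1 hx2
            have := Finset.le_max' D x hxD
            omega
          · have hx3 : x < d := lt_of_lt_of_le hx2 (hT2 s h).2
            exact hT3 s h x hx1 hx2 (Finset.mem_erase.mpr ⟨by omega, hxD⟩)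
        · intro s hs s' hs' hne'
          rcases Finset.mem_insert.mp hs with h | h <;>
            rcases Finset.mem_insert.mp hs' with h' | h'
          · subst h; subst h'; exact absurd rfl hne'
          · subst h
            right
            calc s'.2 ≤ d := (hT2 s' h').2
              _ ≤ (d+1, n).1 := by simp
          · subst h'
            left
            calc s.2 ≤ d := (hT2 s h).2
              _ ≤ (d+1, n).1 := by simp
          · exact hT4 s h s' h' hne'
        · rw [Finset.sum_insert hnotin]
          have hc2 : D.card = D'.card + 1 := by omega
          show n ≤ n - (d + 1) + ∑ s ∈ T', (s.2 - s.1) + D.card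
          omega




section Count

variable {V : Type*} {G : SimpleGraph V} [DecidableRel G.Adj]

/-- all index pairs of path-adjacent... all adjacent index pairs -/
def PS (G : SimpleGraph V) [DecidableRel G.Adj] (ι : ℕ → V) (n : ℕ) : Finset (ℕ × ℕ) :=
  (Finset.range n ×ˢ Finset.range n).filter fun q => q.1 < q.2 ∧ G.Adj (ι q.1) (ι q.2)

def lvlS (G : SimpleGraph V) [DecidableRel G.Adj] (ι : ℕ → V) (n lo m j : ℕ) :
    Finset (ℕ × ℕ) :=
  (PS G ι n).filter fun q => lo ≤ q.1 ∧ q.2 < lo + m ∧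
    (q.1 - lo) * 2^j / m = (q.2 - lo) * 2^j / m ∧
    (q.1 - lo) * 2^(j+1) / m ≠ (q.2 - lo) * 2^(j+1) / m

def nodeS (G : SimpleGraph V) [DecidableRel G.Adj] (ι : ℕ → V) (n lo m j t : ℕ) :
    Finset (ℕ × ℕ) :=
  (lvlS G ι n lo m j).filter fun q => (q.1 - lo) * 2^j / m = t

lemma node_lb {u v : V} (p : G.Walk u v) (hnd : p.support.Nodup)
    (n lo m j t : ℕ) (hn : n = p.length + 1) (hm : lo + m ≤ n)
    (h2j : 2^(j+1) ≤ m) (ht : t < 2^j)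
    (hP4 : ∀ a b c d : V,
      (∃ w, lo ≤ w ∧ w < lo + m ∧ a = p.getVert w) →
      (∃ w, lo ≤ w ∧ w < lo + m ∧ b = p.getVert w) →
      (∃ w, lo ≤ w ∧ w < lo + m ∧ c = p.getVert w) →
      (∃ w, lo ≤ w ∧ w < lo + m ∧ d = p.getVert w) →
      a ≠ b → a ≠ c → a ≠ d → b ≠ c → b ≠ d → c ≠ d →
      G.Adj a b → G.Adj b c → G.Adj c d → ¬G.Adj a c → ¬G.Adj a d → ¬G.Adj b d → False) :
    m / 2^(j+1) ≤ (nodeS G p.getVert n lo m j t).card := by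
  set q2 := 2^(j+1) with hq2
  have hq2pos : 0 < q2 := by positivity
  have hmpos : 0 < m := lt_of_lt_of_le hq2pos h2j
  have h2t : 2*t < q2 := by
    have : 2*t + 1 ≤ 2*2^j := by omega
    simpa [hq2, pow_succ, mul_comm] using this
  have h2t1 : 2*t + 1 < q2 := by
    have h1 : t + 1 ≤ 2^j := ht
    have : 2*(t+1) ≤ 2*2^j := by omega
    have h2 : 2^(j+1) = 2^j * 2 := pow_succ 2 j
    omega
  obtain ⟨a0, hA⟩ := fiber_lb m q2 (2*t) hq2pos h2t h2j
  obtain ⟨b0, hB⟩ := fiber_lb m q2 (2*t+1) hq2pos h2t1 h2j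
  set h := m / q2 with hh
  have hhpos : 0 < h := Nat.div_pos h2j hq2pos
  -- level-j value of fiber members
  have lvlval : ∀ x s, x * q2 / m = s → x * 2^j / m = s / 2 := by
    intro x s hx
    rw [nested x m j, ← hq2, hx]
  -- members of the two half-fibers
  have hAj : ∀ d, d < h → (a0 + d) * 2^j / m = t := by
    intro d hd; rw [lvlval _ _ (hA d hd).2]; omega
  have hBj : ∀ d, d < h → (b0 + d) * 2^j / m = t := by
    intro d hd; rw [lvlval _ _ (hB d hd).2]; omega
  -- order : A < B
  have hAB : ∀ dA dB, dA < h → dB < h → a0 + dA < b0 + dB := by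
    intro dA dB h1 h2
    exact fiber_lt (hA dA h1).2 (hB dB h2).2 (by omega)
  -- the key covering step
  have key : ∀ dA dB, dA < h → dB < h →
      (∃ y, (lo + (a0 + dA), y) ∈ nodeS G p.getVert n lo m j t) ∨
      (∃ x, (x, lo + (b0 + dB)) ∈ nodeS G p.getVert n lo m j t) := by
    intro dA dB h1 h2
    set a := a0 + dA with ha
    set b := b0 + dB with hb
    have hab : a < b := hAB dA dB h1 h2
    have ham : a < m := (hA dA h1).1
    have hbm : b < m := (hB dB h2).1
    have haj : a * 2^j / m = t := hAj dA h1
    have hbj : b * 2^j / m = t := hBj dB h2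
    have hbl : lo + b ≤ p.length := by omega
    -- membership helper for nodeS
    have memNode : ∀ x y : ℕ, lo ≤ x → lo ≤ y → x - lo < m → y - lo < m →
        (x - lo) * 2^j / m = t → (y - lo) * 2^j / m = t →
        (x - lo) * q2 / m ≠ (y - lo) * q2 / m → x < y → G.Adj (p.getVert x) (p.getVert y) →
        (x, y) ∈ nodeS G p.getVert n lo m j t := by
      intro x y hx hy hxm hym hxj hyj hne hlt hadj
      unfold nodeS lvlS PS
      simp only [Finset.mem_filter, Finset.mem_product, Finset.mem_range]
      refine ⟨⟨⟨⟨by omega, by omega⟩, hlt, hadj⟩, hx, by omega, by rw [hxj, hyj], ?_⟩, hxj⟩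
      rw [← hq2]; exact hne
    -- the fiber of level j at t, as a set of vertices
    set Q : Set V := {x | ∃ w, lo ≤ w ∧ w < lo + m ∧ (w - lo) * 2^j / m = t ∧
        x = p.getVert w} with hQ
    have hQsub : ∀ x ∈ Q, ∃ w, lo ≤ w ∧ w < lo + m ∧ x = p.getVert w := by
      rintro x ⟨w, hw1, hw2, _, hw4⟩; exact ⟨w, hw1, hw2, hw4⟩
    -- walk between
    obtain ⟨w, hwsupp⟩ := walkBetween p (b - a) (lo + a) (lo + b) (by omega) hbl
    have hsuppQ : ∀ x ∈ w.support, x ∈ Q := by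
      intro x hx
      obtain ⟨s, hs1, hs2, hs3⟩ := hwsupp x hx
      refine ⟨s, by omega, by omega, ?_, hs3⟩
      -- interval property of the fiber
      have hmono1 : a * 2^j / m ≤ (s - lo) * 2^j / m :=
        Nat.div_le_div_right (Nat.mul_le_mul_right _ (by omega))
      have hmono2 : (s - lo) * 2^j / m ≤ b * 2^j / m :=
        Nat.div_le_div_right (Nat.mul_le_mul_right _ (by omega))
      omega
    have hP4Q : ∀ a' b' c' d' : V, a' ∈ Q → b' ∈ Q → c' ∈ Q → d' ∈ Q →
        a' ≠ b' → a' ≠ c' → a' ≠ d' → b' ≠ c' → b' ≠ d' → c' ≠ d' →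
        G.Adj a' b' → G.Adj b' c' → G.Adj c' d' →
        ¬G.Adj a' c' → ¬G.Adj a' d' → ¬G.Adj b' d' → False := by
      intro a' b' c' d' h1 h2 h3 h4
      exact hP4 a' b' c' d' (hQsub _ h1) (hQsub _ h2) (hQsub _ h3) (hQsub _ h4)
    have := dist2 G Q hP4Q w.length _ _ w (le_refl _) hsuppQ
    rcases this with heq | hadj | ⟨x, hxQ, hadj1, hadj2⟩
    · exfalso
      have := getVert_injOn hnd (lo + a) (by omega) (lo + b) (by omega) heq
      omega
    · left
      refine ⟨lo + b, memNode _ _ (by omega) (by omega) (by simp; omega) (by simp; omega)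
        (by simpa using haj) (by simpa using hbj) ?_ (by omega) hadj⟩
      simp only [Nat.add_sub_cancel_left]
      rw [(hA dA h1).2, (hB dB h2).2]; omega
    · -- common neighbour x = getVert w'
      obtain ⟨w', hw1, hw2, hw3, hw4⟩ := hxQ
      set z := w' - lo with hz
      have hzval : (z * q2 / m) / 2 = t := by
        rw [← nested z m j]; exact hw3
      have hzm : z < m := by omega
      rcases (by omega : z * q2 / m = 2*t ∨ z * q2 / m = 2*t + 1) with hcase | hcase
      · -- z in left half: edge (w', lo+b)
        right
        have hzb : z < b := fiber_lt hcase (hB dB h2).2 (by omega)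
        refine ⟨w', memNode _ _ (by omega) (by omega) (by omega) (by simp; omega)
          hw3 (by simpa using hbj) ?_ (by omega) ?_⟩
        · rw [hcase]; simp only [Nat.add_sub_cancel_left]; rw [(hB dB h2).2]; omega
        · rw [← hw4]; exact hadj2
      · -- z in right half: edge (lo+a, w')
        left
        have hza : a < z := fiber_lt (hA dA h1).2 hcase (by omega)
        refine ⟨w', memNode _ _ (by omega) (by omega) (by simp; omega) (by omega)
          (by simpa using haj) hw3 ?_ (by omega) ?_⟩
        · rw [hcase]; simp only [Nat.add_sub_cancel_left]; rw [(hA dA h1).2]; omega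
        · rw [← hw4]; exact hadj1
  -- covering: one of the two sides is fully covered
  have cover : (∀ d, d < h → ∃ y, (lo + (a0 + d), y) ∈ nodeS G p.getVert n lo m j t) ∨
      (∀ d, d < h → ∃ x, (x, lo + (b0 + d)) ∈ nodeS G p.getVert n lo m j t) := by
    by_contra hcon
    push_neg at hcon
    obtain ⟨⟨d1, hd1, hd1'⟩, ⟨d2, hd2, hd2'⟩⟩ := hcon
    rcases key d1 d2 hd1 hd2 with ⟨y, hy⟩ | ⟨x, hx⟩
    · exact hd1' y hy
    · exact hd2' x hx
  rcases cover with hcov | hcov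
  · set f : ℕ → ℕ × ℕ := fun d =>
      (lo + (a0 + d), if hd : d < h then Classical.choose (hcov d hd) else 0) with hf
    have hmaps : ∀ d ∈ Finset.range h, f d ∈ nodeS G p.getVert n lo m j t := by
      intro d hd
      rw [Finset.mem_range] at hd
      simp only [hf, dif_pos hd]
      exact Classical.choose_spec (hcov d hd)
    have hinj : Set.InjOn f (Finset.range h) := by
      intro d1 _ d2 _ heq
      have := congrArg Prod.fst heq
      simp only [hf] at this
      omega
    calc h = (Finset.range h).card := (Finset.card_range h).symm
      _ ≤ _ := Finset.card_le_card_of_injOn f hmaps hinj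
  · set f : ℕ → ℕ × ℕ := fun d =>
      (if hd : d < h then Classical.choose (hcov d hd) else 0, lo + (b0 + d)) with hf
    have hmaps : ∀ d ∈ Finset.range h, f d ∈ nodeS G p.getVert n lo m j t := by
      intro d hd
      rw [Finset.mem_range] at hd
      simp only [hf, dif_pos hd]
      exact Classical.choose_spec (hcov d hd)
    have hinj : Set.InjOn f (Finset.range h) := by
      intro d1 _ d2 _ heq
      have := congrArg Prod.snd heq
      simp only [hf] at this
      omega
    calc h = (Finset.range h).card := (Finset.card_range h).symm
      _ ≤ _ := Finset.card_le_card_of_injOn f hmaps hinj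

end Count



section Count

variable {V : Type*} {G : SimpleGraph V} [DecidableRel G.Adj]

/-- per-segment guaranteed number of pairs -/
def g (m : ℕ) : ℕ := ∑ j ∈ Finset.range (Nat.log 2 m), 2^j * (m / 2^(j+1))

def segS (G : SimpleGraph V) [DecidableRel G.Adj] (ι : ℕ → V) (n lo m : ℕ) :
    Finset (ℕ × ℕ) :=
  (PS G ι n).filter fun q => lo ≤ q.1 ∧ q.2 < lo + m

lemma seg_lb {u v : V} (p : G.Walk u v) (hnd : p.support.Nodup)
    (n lo m : ℕ) (hn : n = p.length + 1) (hm : lo + m ≤ n)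
    (hP4 : ∀ a b c d : V,
      (∃ w, lo ≤ w ∧ w < lo + m ∧ a = p.getVert w) →
      (∃ w, lo ≤ w ∧ w < lo + m ∧ b = p.getVert w) →
      (∃ w, lo ≤ w ∧ w < lo + m ∧ c = p.getVert w) →
      (∃ w, lo ≤ w ∧ w < lo + m ∧ d = p.getVert w) →
      a ≠ b → a ≠ c → a ≠ d → b ≠ c → b ≠ d → c ≠ d →
      G.Adj a b → G.Adj b c → G.Adj c d → ¬G.Adj a c → ¬G.Adj a d → ¬G.Adj b d → False) :
    g m ≤ (segS G p.getVert n lo m).card := by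
  have hlvl : ∀ j, j + 1 ≤ Nat.log 2 m →
      2^j * (m / 2^(j+1)) ≤ (lvlS G p.getVert n lo m j).card := by
    intro j hj
    have hmne : m ≠ 0 := by
      intro h0
      rw [h0] at hj
      simp [Nat.log_zero_right] at hj
    have h2j : 2^(j+1) ≤ m := (Nat.le_log_iff_pow_le (by norm_num) hmne).mp hj
    have hdisj : ∀ t1 ∈ Finset.range (2^j), ∀ t2 ∈ Finset.range (2^j), t1 ≠ t2 →
        Disjoint (nodeS G p.getVert n lo m j t1) (nodeS G p.getVert n lo m j t2) := by
      intro t1 _ t2 _ hne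
      rw [Finset.disjoint_left]
      intro q hq1 hq2
      unfold nodeS at hq1 hq2
      rw [Finset.mem_filter] at hq1 hq2
      exact hne (hq1.2 ▸ hq2.2 ▸ rfl)
    have hsub : (Finset.range (2^j)).biUnion (fun t => nodeS G p.getVert n lo m j t) ⊆
        lvlS G p.getVert n lo m j := by
      intro q hq
      rw [Finset.mem_biUnion] at hq
      obtain ⟨t, _, hq⟩ := hq
      exact Finset.mem_of_mem_filter _ hq
    calc 2^j * (m / 2^(j+1)) = ∑ _t ∈ Finset.range (2^j), m / 2^(j+1) := by
          rw [Finset.sum_const, Finset.card_range, smul_eq_mul]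
      _ ≤ ∑ t ∈ Finset.range (2^j), (nodeS G p.getVert n lo m j t).card := by
          apply Finset.sum_le_sum
          intro t htr
          rw [Finset.mem_range] at htr
          exact node_lb p hnd n lo m j t hn hm h2j htr hP4
      _ = ((Finset.range (2^j)).biUnion (fun t => nodeS G p.getVert n lo m j t)).card :=
          (Finset.card_biUnion hdisj).symm
      _ ≤ _ := Finset.card_le_card hsub
  have hdisjlvl : ∀ j1 ∈ Finset.range (Nat.log 2 m), ∀ j2 ∈ Finset.range (Nat.log 2 m),
      j1 ≠ j2 → Disjoint (lvlS G p.getVert n lo m j1) (lvlS G p.getVert n lo m j2) := by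
    have key : ∀ j1 j2, j1 < j2 →
        Disjoint (lvlS G p.getVert n lo m j1) (lvlS G p.getVert n lo m j2) := by
      intro j1 j2 hlt
      rw [Finset.disjoint_left]
      intro q hq1 hq2
      unfold lvlS at hq1 hq2
      rw [Finset.mem_filter] at hq1 hq2
      exact hq1.2.2.2.2 (sameUp (by omega) hq2.2.2.2.1)
    intro j1 _ j2 _ hne
    rcases Nat.lt_or_ge j1 j2 with h | h
    · exact key j1 j2 h
    · exact (key j2 j1 (by omega)).symm
  have hsub2 : (Finset.range (Nat.log 2 m)).biUnion (fun j => lvlS G p.getVert n lo m j) ⊆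
      segS G p.getVert n lo m := by
    intro q hq
    rw [Finset.mem_biUnion] at hq
    obtain ⟨j, _, hq⟩ := hq
    unfold lvlS at hq
    unfold segS
    rw [Finset.mem_filter] at hq ⊢
    exact ⟨hq.1, hq.2.1, hq.2.2.1⟩
  calc g m ≤ ∑ j ∈ Finset.range (Nat.log 2 m), (lvlS G p.getVert n lo m j).card := by
        apply Finset.sum_le_sum
        intro j hj
        rw [Finset.mem_range] at hj
        exact hlvl j hj
    _ = ((Finset.range (Nat.log 2 m)).biUnion (fun j => lvlS G p.getVert n lo m j)).card :=
        (Finset.card_biUnion hdisjlvl).symm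
    _ ≤ _ := Finset.card_le_card hsub2

end Count



section Count

variable {V : Type*} {G : SimpleGraph V} [DecidableRel G.Adj]

lemma total_segs {u v : V} (p : G.Walk u v) (n : ℕ) (T : Finset (ℕ × ℕ))
    (hb : ∀ s ∈ T, s.1 ≤ s.2 ∧ s.2 ≤ n)
    (hdisj : ∀ s ∈ T, ∀ s' ∈ T, s ≠ s' → s.2 ≤ s'.1 ∨ s'.2 ≤ s.1) :
    ∑ s ∈ T, (segS G p.getVert n s.1 (s.2 - s.1)).card ≤ (PS G p.getVert n).card := by
  have hmem : ∀ s ∈ T, ∀ q ∈ segS G p.getVert n s.1 (s.2 - s.1),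
      s.1 ≤ q.1 ∧ q.1 < s.2 := by
    intro s hs q hq
    unfold segS PS at hq
    simp only [Finset.mem_filter, Finset.mem_product, Finset.mem_range] at hq
    have h1 := (hb s hs).1
    omega
  have hdisj2 : ∀ s1 ∈ T, ∀ s2 ∈ T, s1 ≠ s2 →
      Disjoint (segS G p.getVert n s1.1 (s1.2 - s1.1)) (segS G p.getVert n s2.1 (s2.2 - s2.1)) := by
    intro s1 hs1 s2 hs2 hne
    rw [Finset.disjoint_left]
    intro q hq1 hq2
    have h1 := hmem s1 hs1 q hq1
    have h2 := hmem s2 hs2 q hq2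
    rcases hdisj s1 hs1 s2 hs2 hne with h | h <;> omega
  have hsub : T.biUnion (fun s => segS G p.getVert n s.1 (s.2 - s.1)) ⊆ PS G p.getVert n := by
    intro q hq
    rw [Finset.mem_biUnion] at hq
    obtain ⟨s, _, hq⟩ := hq
    exact Finset.mem_of_mem_filter _ hq
  calc ∑ s ∈ T, (segS G p.getVert n s.1 (s.2 - s.1)).card
      = (T.biUnion (fun s => segS G p.getVert n s.1 (s.2 - s.1))).card :=
        (Finset.card_biUnion hdisj2).symm
    _ ≤ _ := Finset.card_le_card hsub

lemma PS_le_edges [Fintype V] {u v : V} (p : G.Walk u v) (hnd : p.support.Nodup)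
    (n : ℕ) (hn : n = p.length + 1) :
    (PS G p.getVert n).card ≤ G.edgeSet.ncard := by
  classical
  set f : ℕ × ℕ → Sym2 V := fun q => s(p.getVert q.1, p.getVert q.2) with hf
  have hmapsub : ↑((PS G p.getVert n).image f) ⊆ G.edgeSet := by
    intro e he
    simp only [Finset.coe_image, Set.mem_image, Finset.mem_coe] at he
    obtain ⟨q, hq, rfl⟩ := he
    unfold PS at hq
    simp only [Finset.mem_filter, Finset.mem_product, Finset.mem_range] at hq
    exact hq.2.2
  have hinj : Set.InjOn f (PS G p.getVert n) := by
    intro q1 hq1 q2 hq2 heq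
    unfold PS at hq1 hq2
    simp only [Finset.coe_filter, Set.mem_setOf_eq, Finset.mem_product, Finset.mem_range] at hq1 hq2
    simp only [hf, Sym2.eq_iff] at heq
    have inj := getVert_injOn hnd
    rcases heq with ⟨h1, h2⟩ | ⟨h1, h2⟩
    · have e1 := inj q1.1 (by omega) q2.1 (by omega) h1
      have e2 := inj q1.2 (by omega) q2.2 (by omega) h2
      exact Prod.ext e1 e2
    · have e1 := inj q1.1 (by omega) q2.2 (by omega) h1
      have e2 := inj q1.2 (by omega) q2.1 (by omega) h2
      exfalso
      omega
  calc (PS G p.getVert n).card = ((PS G p.getVert n).image f).card :=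
        (Finset.card_image_of_injOn hinj).symm
    _ = (↑((PS G p.getVert n).image f) : Set (Sym2 V)).ncard := (Set.ncard_coe_finset _).symm
    _ ≤ G.edgeSet.ncard := Set.ncard_le_ncard hmapsub (Set.toFinite _)

lemma path_pairs {u v : V} (p : G.Walk u v) (n : ℕ) (hn : n = p.length + 1) :
    n - 1 ≤ (PS G p.getVert n).card := by
  have hmaps : ∀ i ∈ Finset.range (n-1), (i, i+1) ∈ PS G p.getVert n := by
    intro i hi
    rw [Finset.mem_range] at hi
    unfold PS
    simp only [Finset.mem_filter, Finset.mem_product, Finset.mem_range]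
    exact ⟨⟨by omega, by omega⟩, by omega, p.adj_getVert_succ (by omega)⟩
  have hinj : Set.InjOn (fun i => ((i, i+1) : ℕ × ℕ)) (Finset.range (n-1)) := by
    intro i _ j _ heq
    simpa using congrArg Prod.fst heq
  calc n - 1 = (Finset.range (n-1)).card := (Finset.card_range _).symm
    _ ≤ _ := Finset.card_le_card_of_injOn _ hmaps hinj

end Count

/-- extract the P4 hypothesis from the cograph property -/
lemma hP4_of_cograph {V : Type*} [Fintype V] [DecidableEq V] {G : SimpleGraph V} {S : Finset V}
    (hCo : IsCograph (G.induce (↑(Sᶜ) : Set V))) :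
    ∀ a b c d : V, a ∉ S → b ∉ S → c ∉ S → d ∉ S →
      a ≠ b → a ≠ c → a ≠ d → b ≠ c → b ≠ d → c ≠ d →
      G.Adj a b → G.Adj b c → G.Adj c d → ¬G.Adj a c → ¬G.Adj a d → ¬G.Adj b d → False := by
  intro a b c d ha hb hc hd hab hac had hbc hbd hcd h1 h2 h3 h4 h5 h6
  apply hCo
  have ha' : a ∈ (↑(Sᶜ) : Set V) := by simp [ha]
  have hb' : b ∈ (↑(Sᶜ) : Set V) := by simp [hb]
  have hc' : c ∈ (↑(Sᶜ) : Set V) := by simp [hc]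
  have hd' : d ∈ (↑(Sᶜ) : Set V) := by simp [hd]
  refine ⟨⟨a, ha'⟩, ⟨b, hb'⟩, ⟨c, hc'⟩, ⟨d, hd'⟩, ?_, ?_, ?_, ?_, ?_, ?_, ?_⟩
  · simp [List.nodup_cons, Subtype.ext_iff]
    exact ⟨⟨hab, hac, had⟩, ⟨hbc, hbd⟩, hcd⟩
  all_goals simp [SimpleGraph.comap_adj]
  · exact h1
  · exact h2
  · exact h3
  · exact h4
  · exact h5
  · exact h6

/-- Main combinatorial result -/
lemma main_count {V : Type*} [Fintype V] [DecidableEq V] (G : SimpleGraph V) {u v : V}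
    (p : G.Walk u v) (hham : p.IsHamiltonian) (S : Finset V)
    (hCo : IsCograph (G.induce (↑(Sᶜ) : Set V))) :
    ∃ T : Finset (ℕ × ℕ), T.card ≤ S.card + 1 ∧
      Fintype.card V ≤ (∑ s ∈ T, (s.2 - s.1)) + S.card ∧
      (∑ s ∈ T, g (s.2 - s.1)) ≤ G.edgeSet.ncard ∧
      Fintype.card V - 1 ≤ G.edgeSet.ncard := by
  classical
  set n := Fintype.card V with hnV
  have hnd : p.support.Nodup := hham.isPath.support_nodup
  have hcard : 0 < n := Fintype.card_pos_iff.mpr ⟨u⟩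
  have hn : n = p.length + 1 := by
    have := hham.length_eq
    omega
  set ι := p.getVert with hι
  -- dirty indices
  set D : Finset ℕ := (Finset.range n).filter (fun a => ι a ∈ S) with hD
  have hDS : D.card ≤ S.card := by
    refine Finset.card_le_card_of_injOn ι ?_ ?_
    · intro a ha
      rw [hD, Finset.mem_coe, Finset.mem_filter] at ha
      exact ha.2
    · intro a ha b hb heq
      rw [hD, Finset.coe_filter, Set.mem_setOf_eq, Finset.mem_range] at ha hb
      exact getVert_injOn hnd a (by omega) b (by omega) heq
  obtain ⟨T, hT1, hT2, hT3, hT4, hT5⟩ := segDecomp D.card D n (le_refl _)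
    (fun d hd => by rw [hD, Finset.mem_filter, Finset.mem_range] at hd; exact hd.1)
  have hP4 := hP4_of_cograph hCo
  refine ⟨T, by omega, by omega, ?_, ?_⟩
  · calc ∑ s ∈ T, g (s.2 - s.1)
        ≤ ∑ s ∈ T, (segS G ι n s.1 (s.2 - s.1)).card := by
          apply Finset.sum_le_sum
          intro s hs
          apply seg_lb p hnd n s.1 (s.2 - s.1) hn (by have := hT2 s hs; omega)
          intro a b c d hma hmb hmc hmd
          have hclean : ∀ x : V, (∃ w, s.1 ≤ w ∧ w < s.1 + (s.2 - s.1) ∧ x = ι w) → x ∉ S := by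
            rintro x ⟨w, hw1, hw2, rfl⟩
            have hw3 : w < s.2 := by omega
            have := hT3 s hs w hw1 hw3
            rw [hD, Finset.mem_filter, Finset.mem_range] at this
            have hwn : w < n := by have := (hT2 s hs).2; omega
            tauto
          exact hP4 a b c d (hclean a hma) (hclean b hmb) (hclean c hmc) (hclean d hmd)
      _ ≤ (PS G ι n).card := total_segs p n T hT2 hT4
      _ ≤ G.edgeSet.ncard := PS_le_edges p hnd n hn
  · calc n - 1 ≤ (PS G ι n).card := path_pairs p n hn
      _ ≤ G.edgeSet.ncard := PS_le_edges p hnd n hn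



/-- each dyadic level contributes at least m/4 -/
lemma g_term_lb (m j : ℕ) (hj : 2^(j+1) ≤ m) :
    (m : ℝ) / 4 ≤ ((2^j * (m / 2^(j+1)) : ℕ) : ℝ) := by
  have hy : 0 < 2^(j+1) := by positivity
  have h1 : 1 ≤ m / 2^(j+1) := Nat.one_le_div_iff hy |>.mpr hj
  have h2 : m < m / 2^(j+1) * 2^(j+1) + 2^(j+1) := Nat.lt_div_mul_add hy
  have h3 : m ≤ 2 * (2^(j+1) * (m / 2^(j+1))) := by
    have e1 : m / 2^(j+1) * 2^(j+1) = 2^(j+1) * (m / 2^(j+1)) := mul_comm _ _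
    have h0 : 2^(j+1) ≤ 2^(j+1) * (m / 2^(j+1)) := Nat.le_mul_of_pos_right _ h1
    omega
  have h4 : (m : ℝ) ≤ 2 * (2^(j+1) * (m / 2^(j+1) : ℕ)) := by exact_mod_cast h3
  have h5 : ((2^j * (m / 2^(j+1)) : ℕ) : ℝ) = 2^j * ((m / 2^(j+1) : ℕ) : ℝ) := by
    push_cast; ring
  have h6 : (2:ℝ) * 2^(j+1) = 4 * 2^j := by ring
  rw [h5]
  have h2j : (0:ℝ) < 2^j := by positivity
  nlinarith [h2j]

lemma g_lb (m : ℕ) : (m : ℝ) / 4 * Real.logb 2 ((m : ℝ) / 2) ≤ (g m : ℝ) := by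
  rcases Nat.eq_zero_or_pos m with rfl | hm
  · simp
  · set M := Nat.log 2 m with hM
    have hlog : Real.logb 2 ((m : ℝ) / 2) ≤ M := by
      have h1 : (m : ℝ) < 2^(M+1) := by
        exact_mod_cast Nat.lt_pow_succ_log_self (by norm_num) m
      have h2 : Real.logb 2 (m : ℝ) < M + 1 := by
        calc Real.logb 2 (m : ℝ) < Real.logb 2 ((2:ℝ)^(M+1)) := by
              apply Real.logb_lt_logb (by norm_num) (by exact_mod_cast hm) h1
          _ = M + 1 := by
              rw [Real.logb_pow, Real.logb_self_eq_one (by norm_num)]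
              push_cast; ring
      have h3 : Real.logb 2 ((m : ℝ) / 2) = Real.logb 2 (m : ℝ) - 1 := by
        rw [Real.logb_div (by positivity) (by norm_num)]
        simp
      rw [h3]
      linarith
    calc (m : ℝ) / 4 * Real.logb 2 ((m : ℝ) / 2) ≤ (m : ℝ) / 4 * M := by
          apply mul_le_mul_of_nonneg_left hlog (by positivity)
      _ ≤ (g m : ℝ) := by
          unfold M
          unfold g
          push_cast
          calc (m : ℝ) / 4 * (Nat.log 2 m) = ∑ _j ∈ Finset.range (Nat.log 2 m), (m:ℝ)/4 := by
                rw [Finset.sum_const, Finset.card_range]; ring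
            _ ≤ _ := by
                apply Finset.sum_le_sum
                intro j hj
                rw [Finset.mem_range] at hj
                have h2j : 2^(j+1) ≤ m :=
                  (Nat.le_log_iff_pow_le (by norm_num) (by omega)).mp hj
                have := g_term_lb m j h2j
                push_cast at this
                exact this

lemma tangent (x : ℕ) (c : ℝ) (hc : 0 < c) :
    (x:ℝ)/4 * Real.logb 2 (c/2) + ((x:ℝ) - c)/(4 * Real.log 2) ≤
      (x:ℝ)/4 * Real.logb 2 ((x:ℝ)/2) := by
  have hlog2 : 0 < Real.log 2 := Real.log_pos (by norm_num)
  rcases Nat.eq_zero_or_pos x with rfl | hx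
  · simp only [Nat.cast_zero, zero_div, zero_mul, zero_add, zero_sub]
    have : -c / (4 * Real.log 2) ≤ 0 :=
      by apply div_nonpos_of_nonpos_of_nonneg <;> [linarith; positivity]
    linarith
  · have hxR : (0:ℝ) < x := by exact_mod_cast hx
    have key : (x:ℝ) - c ≤ (x:ℝ) * (Real.log x - Real.log c) := by
      have h1 : Real.log (c / x) ≤ c / x - 1 := Real.log_le_sub_one_of_pos (by positivity)
      have h2 : Real.log (c / x) = Real.log c - Real.log x := Real.log_div (by positivity) (by positivity)
      rw [h2] at h1
      have h3 := mul_le_mul_of_nonneg_left h1 (le_of_lt hxR)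
      have h4 : (x:ℝ) * (c / x - 1) = c - x := by field_simp
      nlinarith
    have hdiff : Real.logb 2 ((x:ℝ)/2) - Real.logb 2 (c/2) =
        (Real.log x - Real.log c) / Real.log 2 := by
      unfold Real.logb
      rw [Real.log_div (by positivity) (by norm_num), Real.log_div (by positivity) (by norm_num)]
      ring
    have goal2 : ((x:ℝ) - c)/(4 * Real.log 2) ≤
        (x:ℝ)/4 * (Real.logb 2 ((x:ℝ)/2) - Real.logb 2 (c/2)) := by
      rw [hdiff]
      rw [div_le_iff₀ (by positivity)]
      have heq : (x:ℝ)/4 * ((Real.log x - Real.log c) / Real.log 2) * (4 * Real.log 2) =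
          (x:ℝ) * (Real.log x - Real.log c) := by
        field_simp
      rw [heq]
      exact key
    linarith

lemma logb_64_27 : Real.logb 2 ((64:ℝ)/27) ≤ 5/4 := by
  have h1 : ((64:ℝ)/27)^(4:ℕ) ≤ (2:ℝ)^(5:ℕ) := by norm_num
  have h2 : Real.logb 2 (((64:ℝ)/27)^(4:ℕ)) ≤ Real.logb 2 ((2:ℝ)^(5:ℕ)) :=
    Real.logb_le_logb_of_le (by norm_num) (by norm_num) h1
  rw [Real.logb_pow, Real.logb_pow, Real.logb_self_eq_one (by norm_num)] at h2
  norm_num at h2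
  linarith

lemma logb_3pow : Real.logb 2 ((64:ℝ)/27) = 3 * Real.logb 2 ((4:ℝ)/3) := by
  have : ((4:ℝ)/3)^(3:ℕ) = (64:ℝ)/27 := by norm_num
  rw [← this, Real.logb_pow]
  norm_num



lemma final_cmp (N K P Q R : ℝ) (hN4 : 4 ≤ N) (hKN : 4*K ≤ N) (hK0 : 0 ≤ K)
    (hR0 : 0 ≤ R) (hlogY : P - R ≤ Q) (hlogX : 3*R ≤ P) :
    (1/8)*N*P ≤ (N-K)/4*Q := by
  have hQ0 : 0 ≤ P - R := by linarith
  have h1 : (N-K)/4 * (P - R) ≤ (N-K)/4 * Q :=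
    mul_le_mul_of_nonneg_left hlogY (by linarith)
  have h2 : (3/16)*N*(P-R) ≤ (N-K)/4*(P-R) :=
    mul_le_mul_of_nonneg_right (by linarith) hQ0
  have h3 : 0 ≤ (N/16)*(P - 3*R) := mul_nonneg (by linarith) (by linarith)
  nlinarith [h1, h2, h3]

lemma analytic (n k E : ℕ) (T : Finset (ℕ × ℕ))
    (hT1 : T.card ≤ k + 1)
    (hT5 : n ≤ (∑ s ∈ T, (s.2 - s.1)) + k)
    (hE1 : (∑ s ∈ T, g (s.2 - s.1)) ≤ E)
    (hE2 : n - 1 ≤ E)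
    (hn : 4 * max k 1 ≤ n) :
    (1/8 : ℝ) * n * Real.logb 2 ((n:ℝ) / (2 * ((k:ℝ)+1))) ≤ (E:ℝ) := by
  have hlog2 : 0 < Real.log 2 := Real.log_pos (by norm_num)
  set N := (n : ℝ) with hN
  set K := (k : ℝ) with hK
  have hn4 : 4 ≤ n := le_trans (by have := Nat.le_max_right k 1; omega) hn
  have hkn : 4 * k ≤ n := le_trans (by have := Nat.le_max_left k 1; omega) hn
  have hN4 : (4:ℝ) ≤ N := by rw [hN]; exact_mod_cast hn4
  have hKN : 4 * K ≤ N := by rw [hN, hK]; exact_mod_cast hkn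
  have hK0 : (0:ℝ) ≤ K := Nat.cast_nonneg k
  have hden : (0:ℝ) < 2 * (K + 1) := by linarith
  have hX : (0:ℝ) < N / (2 * (K + 1)) := by positivity
  have hEn : (N:ℝ) - 1 ≤ E := by
    have : ((n - 1 : ℕ) : ℝ) ≤ E := by exact_mod_cast hE2
    have h1 : ((n - 1 : ℕ) : ℝ) = N - 1 := by
      rw [Nat.cast_sub (by omega)]; simp [hN]
    linarith
  by_cases hcase : N / (2 * (K + 1)) ≤ 64/27
  · -- small log case: use n - 1 edges
    have hL : Real.logb 2 (N / (2 * (K + 1))) ≤ 5/4 :=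
      le_trans (Real.logb_le_logb_of_le (by norm_num) hX hcase) logb_64_27
    have h1 : (1/8 : ℝ) * N * Real.logb 2 (N / (2 * (K + 1))) ≤ (1/8) * N * (5/4) := by
      apply mul_le_mul_of_nonneg_left hL (by linarith)
    nlinarith
  · push_neg at hcase
    set c : ℝ := (N - K)/(K + 1) with hc
    have hK1 : (0:ℝ) < K + 1 := by linarith
    have hNK : (128/27) * (K + 1) ≤ N := by
      rw [lt_div_iff₀ hden] at hcase
      linarith
    have hc2 : (2:ℝ) ≤ c := by
      rw [le_div_iff₀ hK1]
      nlinarith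
    have hcpos : (0:ℝ) < c := by linarith
    -- the sum of segment lengths
    set SM : ℝ := ∑ s ∈ T, ((s.2 - s.1 : ℕ) : ℝ) with hSM
    have hSMlb : N - K ≤ SM := by
      have : (n:ℝ) ≤ (((∑ s ∈ T, (s.2 - s.1)) + k : ℕ) : ℝ) := by exact_mod_cast hT5
      push_cast at this
      rw [hSM]
      push_cast
      linarith
    have hlogc : 0 ≤ Real.logb 2 (c/2) :=
      Real.logb_nonneg (by norm_num) (by linarith)
    -- chain of sums
    have hchain : SM/4 * Real.logb 2 (c/2) + (SM - T.card * c)/(4 * Real.log 2)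
        ≤ (E : ℝ) := by
      have step : ∀ s ∈ T, ((s.2 - s.1 : ℕ):ℝ)/4 * Real.logb 2 (c/2) +
          (((s.2 - s.1 : ℕ):ℝ) - c)/(4 * Real.log 2) ≤ (g (s.2 - s.1) : ℝ) :=
        fun s _ => le_trans (tangent (s.2 - s.1) c hcpos) (g_lb _)
      have hsum := Finset.sum_le_sum step
      have hL : (∑ s ∈ T, (((s.2 - s.1 : ℕ):ℝ)/4 * Real.logb 2 (c/2) +
          (((s.2 - s.1 : ℕ):ℝ) - c)/(4 * Real.log 2)))
          = SM/4 * Real.logb 2 (c/2) + (SM - T.card * c)/(4 * Real.log 2) := by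
        rw [Finset.sum_add_distrib, ← Finset.sum_div, ← Finset.sum_mul, ← Finset.sum_div,
          Finset.sum_sub_distrib, Finset.sum_const, ← hSM]
        simp [nsmul_eq_mul]
      have hR : (∑ s ∈ T, (g (s.2 - s.1) : ℝ)) ≤ (E : ℝ) := by
        have : ((∑ s ∈ T, g (s.2 - s.1) : ℕ) : ℝ) ≤ (E : ℝ) := by exact_mod_cast hE1
        push_cast at this
        exact this
      rw [hL] at hsum
      linarith
    have hcardK : (T.card : ℝ) ≤ K + 1 := by rw [hK]; exact_mod_cast hT1
    have hcard : (T.card : ℝ) * c ≤ (K + 1) * c :=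
      mul_le_mul_of_nonneg_right hcardK (le_of_lt hcpos)
    have hKc : (K + 1) * c = N - K := by
      rw [hc]; field_simp
    have hterm2 : 0 ≤ (SM - T.card * c)/(4 * Real.log 2) := by
      apply div_nonneg _ (by positivity)
      nlinarith
    have hEc : (N - K)/4 * Real.logb 2 (c/2) ≤ (E : ℝ) := by
      have h1 : (N - K)/4 * Real.logb 2 (c/2) ≤ SM/4 * Real.logb 2 (c/2) := by
        apply mul_le_mul_of_nonneg_right _ hlogc
        linarith
      linarith
    -- final comparison
    set X := N / (2 * (K + 1)) with hXdef
    set Y := c / 2 with hY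
    have hYX : (3/4) * X ≤ Y := by
      rw [hY, hc, hXdef]
      have e1 : (N - K)/(K+1)/2 = (N - K)/(2*(K+1)) := by
        rw [div_div, mul_comm (K+1) 2]
      have e2 : (3/4 : ℝ) * (N/(2*(K+1))) = (3/4*N)/(2*(K+1)) := by ring
      rw [e1, e2]
      gcongr
      linarith
    have hR0 : 0 ≤ Real.logb 2 ((4:ℝ)/3) := Real.logb_nonneg (by norm_num) (by norm_num)
    have hlogY : Real.logb 2 X - Real.logb 2 ((4:ℝ)/3) ≤ Real.logb 2 Y := by
      have h1 : Real.logb 2 ((3/4) * X) ≤ Real.logb 2 Y :=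
        Real.logb_le_logb_of_le (by norm_num) (by positivity) hYX
      have h2 : Real.logb 2 ((3/4) * X) = Real.logb 2 (3/4) + Real.logb 2 X :=
        Real.logb_mul (by norm_num) (by positivity)
      have h3 : Real.logb 2 ((3:ℝ)/4) = - Real.logb 2 ((4:ℝ)/3) := by
        rw [show ((3:ℝ)/4) = ((4:ℝ)/3)⁻¹ by norm_num, Real.logb_inv]
      linarith
    have hlogX : 3 * Real.logb 2 ((4:ℝ)/3) ≤ Real.logb 2 X := by
      rw [← logb_3pow]
      exact Real.logb_le_logb_of_le (by norm_num) (by norm_num) (le_of_lt hcase)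
    have hfinal : (1/8 : ℝ) * N * Real.logb 2 X ≤ (N - K)/4 * Real.logb 2 Y :=
      final_cmp N K _ _ _ hN4 hKN hK0 hR0 hlogY hlogX
    exact le_trans hfinal hEc


end Aux14

/-- A traceable graph on `n ≥ 4·max{dist_Π(G),1}` vertices, where `Π` is the class of
cographs, has at least `(1/8)·n·log₂(n/(2(dist_Π(G)+1)))` edges. -/
theorem stmt_14 {V : Type*} [Fintype V] [DecidableEq V] (G : SimpleGraph V)
    (hG : Traceable G) (hn : 4 * max (distToCograph G) 1 ≤ Fintype.card V) :
    (1 / 8 : ℝ) * (Fintype.card V : ℝ) *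
        Real.logb 2 ((Fintype.card V : ℝ) / (2 * (distToCograph G + 1))) ≤
      (G.edgeSet.ncard : ℝ) := by
  classical
  obtain ⟨u, v, p, hham⟩ := hG
  set k := distToCograph G with hk
  have hmem : k ∈ {k | ∃ S : Finset V, S.card ≤ k ∧
      IsCograph (G.induce (↑(Sᶜ) : Set V))} := by
    rw [hk, distToCograph]
    apply Nat.sInf_mem
    refine ⟨Fintype.card V, Finset.univ, by simp [Finset.card_univ], ?_⟩
    rintro ⟨⟨a, ha⟩, -⟩
    simp at ha
  obtain ⟨S, hScard, hCo⟩ := hmem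
  obtain ⟨T, hT1, hT2, hT3, hT4⟩ := Aux14.main_count G p hham S hCo
  have := Aux14.analytic (Fintype.card V) k (G.edgeSet.ncard) T
    (by omega) (by omega) hT3 hT4 hn
  exact_mod_cast this
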